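/- arXiv:2601.13185 — 9 statements merged into one kernel-verified Lean document; each statement's English description precedes it below -/
import Mathlib

section
/- Let A be a Novikov algebra. Then for all x, y, z, t in A the identities (x,y,z)·t = (x·t, y, z) and (x,y,z)·t = (x, y·t, z) hold, where (x,y,z) = (x·y)·z − x·(y·z) denotes the associator. -/
/-- In any Novikov algebra `A` (a not necessarily associative,
not necessarily unital algebra satisfying left symmetry of the associator and
right commutativity), the identities `(x,y,z)·t = (x·t,y,z)` and
`(x,y,z)·t = (x,y·t,z)` hold, where `(x,y,z) = (x·y)·z − x·(y·z)`. -/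
theorem novikov_associator_right_mul
    (A : Type*) [NonUnitalNonAssocRing A]
    (hNov1 : ∀ x y z : A, (x * y) * z - x * (y * z) = (y * x) * z - y * (x * z))
    (hNov2 : ∀ x y z : A, (x * y) * z = (x * z) * y) :
    ∀ x y z t : A,
      ((x * y) * z - x * (y * z)) * t
        = ((x * t) * y) * z - (x * t) * (y * z) ∧
      ((x * y) * z - x * (y * z)) * t
        = (x * (y * t)) * z - x * ((y * t) * z) := by
  intro x y z t
  constructor
  · rw [sub_mul, hNov2 (x*y) z t, hNov2 x y t, hNov2 x (y*z) t]
  · rw [hNov1 x (y*t) z, hNov1 x y z, sub_mul, hNov2 (y*x) z t, hNov2 y x t,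
      hNov2 y (x*z) t]
end

section
/- Let A be a Novikov algebra, x ∈ A and n ≥ 1 with (x^n)^2 = 0 and (x^{n+1})^2 = 0, where x^k denotes the left-normed power. Then for every m with 1 ≤ m ≤ n, the element ((x^n·x^m)·x − x^n·x^{m+1}), after applying right multiplication by x a total of (n−m+1) times, equals 0. -/
/-- Left-normed power: `lpow x 1 = x`, `lpow x (k+1) = lpow x k * x`
(the value at `0` is a junk value). -/
def lpow {A : Type*} [Mul A] [Zero A] (x : A) : ℕ → A
  | 0 => 0
  | 1 => x
  | (n + 2) => lpow x (n + 1) * x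

lemma lpow_succ {A : Type*} [Mul A] [Zero A] (x : A) (k : ℕ) (hk : 1 ≤ k) :
    lpow x (k + 1) = lpow x k * x := by
  match k, hk with
  | (j + 1), _ => rfl

section Aux

variable {A : Type*} [NonUnitalNonAssocRing A]
  (hNov1 : ∀ x y z : A, (x * y) * z - x * (y * z) = (y * x) * z - y * (x * z))
  (hNov2 : ∀ x y z : A, (x * y) * z = (x * z) * y)
  (x : A)

/-- The key element `f p q = x^{p+1}·x^q − x^p·x^{q+1}`. -/
private def fel (x : A) (p q : ℕ) : A :=
  lpow x (p + 1) * lpow x q - lpow x p * lpow x (q + 1)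

include hNov2 in
lemma fel_mul_x (p q : ℕ) (hp : 1 ≤ p) (hq : 1 ≤ q) :
    fel x p q * x = fel x (p + 1) q := by
  unfold fel
  rw [sub_mul, hNov2 (lpow x (p + 1)) (lpow x q) x,
    hNov2 (lpow x p) (lpow x (q + 1)) x,
    ← lpow_succ x (p + 1) (by omega), ← lpow_succ x p hp]

include hNov2 in
lemma fel_iter (p q k : ℕ) (hp : 1 ≤ p) (hq : 1 ≤ q) :
    (fun a => a * x)^[k] (fel x p q) = fel x (p + k) q := by
  induction k with
  | zero => rfl
  | succ k ih =>
      rw [Function.iterate_succ_apply', ih]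
      have := fel_mul_x hNov2 x (p + k) q (by omega) hq
      simpa [Nat.add_assoc] using this

include hNov1 hNov2 in
lemma fel_symm (p q : ℕ) (hp : 1 ≤ p) (hq : 1 ≤ q) :
    fel x p q = fel x q p := by
  have h := hNov1 (lpow x p) (lpow x q) x
  rw [hNov2 (lpow x p) (lpow x q) x, hNov2 (lpow x q) (lpow x p) x,
    ← lpow_succ x p hp, ← lpow_succ x q hq] at h
  unfold fel
  exact h

end Aux

/-- Let `A` be a Novikov algebra, `x ∈ A`, `n ≥ 1` with
`(x^n)^2 = 0` and `(x^{n+1})^2 = 0`.  Then for every `m` with `1 ≤ m ≤ n`, the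
element `(x^n·x^m)·x − x^n·x^{m+1}` becomes `0` after applying right
multiplication by `x` a total of `n − m + 1` times. -/
theorem novikov_associator_power_vanishes
    (A : Type*) [NonUnitalNonAssocRing A]
    (hNov1 : ∀ x y z : A, (x * y) * z - x * (y * z) = (y * x) * z - y * (x * z))
    (hNov2 : ∀ x y z : A, (x * y) * z = (x * z) * y)
    (x : A) (n : ℕ) (hn : 1 ≤ n)
    (h1 : lpow x n * lpow x n = 0)
    (h2 : lpow x (n + 1) * lpow x (n + 1) = 0)
    (m : ℕ) (hm1 : 1 ≤ m) (hmn : m ≤ n) :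
    (fun a => a * x)^[n - m + 1]
        ((lpow x n * lpow x m) * x - lpow x n * lpow x (m + 1)) = 0 := by
  -- the starting element is `fel x n m`
  have hstart : (lpow x n * lpow x m) * x - lpow x n * lpow x (m + 1)
      = fel x n m := by
    unfold fel
    rw [hNov2, ← lpow_succ x n hn]
  rw [hstart, Function.iterate_succ_apply]
  show (fun a => a * x)^[n - m] (fel x n m * x) = 0
  rw [fel_mul_x hNov2 x n m hn hm1,
    fel_symm hNov1 hNov2 x (n + 1) m (by omega) hm1,
    fel_iter hNov2 x m (n + 1) (n - m) hm1 (by omega)]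
  have hmn' : m + (n - m) = n := by omega
  rw [hmn', fel_symm hNov1 hNov2 x n (n + 1) hn (by omega)]
  -- now show `fel x (n+1) n = 0`
  unfold fel
  have e1 : lpow x (n + 1) * lpow x n = 0 := by
    rw [lpow_succ x n hn, ← hNov2, h1, zero_mul]
  have e2 : lpow x (n + 1 + 1) * lpow x n = 0 := by
    rw [lpow_succ x (n + 1) (by omega), ← hNov2, e1, zero_mul]
  rw [e2, h2, sub_zero]
end

section
/- Let A be a Novikov algebra and x ∈ A such that (x^n)^2 = 0 and (x^{n+1})^2 = 0 for some n ≥ 1, where x^k denotes the left-normed power. Then x^{2n+2} = 0. -/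
/-- **Lemma 1.** Let `A` be a Novikov algebra and `x ∈ A` such
that `(x^n)^2 = 0` and `(x^{n+1})^2 = 0` for some `n ≥ 1`, where `x^k` is the
left-normed power.  Then `x^{2n+2} = 0`. -/
theorem novikov_lpow_sq_zero
    (A : Type*) [NonUnitalNonAssocRing A]
    (hNov1 : ∀ x y z : A, (x * y) * z - x * (y * z) = (y * x) * z - y * (x * z))
    (hNov2 : ∀ x y z : A, (x * y) * z = (x * z) * y)
    (x : A) (n : ℕ) (hn : 1 ≤ n)
    (h1 : lpow x n * lpow x n = 0)
    (h2 : lpow x (n + 1) * lpow x (n + 1) = 0) :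
    lpow x (2 * n + 2) = 0 := by
  obtain ⟨m, rfl⟩ : ∃ m, n = m + 1 := ⟨n - 1, by omega⟩
  set t : ℕ → A := lpow x with ht
  have hstep : ∀ k, t (k + 2) = t (k + 1) * x := fun k => rfl
  have hx : t 1 = x := rfl
  -- right multiplication by x shifts the first index
  have hR : ∀ a b, (t (a+1) * t b) * x = t (a + 2) * t b := by
    intro a b
    rw [hNov2, ← hstep a]
  -- symmetrized products depend only on the sum of indices
  have hSym : ∀ a b, t (a+2) * t (b+1) + t (b+1) * t (a+2)
      = t (a+1) * t (b+2) + t (b+2) * t (a+1) := by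
    intro a b
    have h := hNov1 (t (a+1)) (t (b+1)) x
    rw [hNov2 (t (a+1)) (t (b+1)) x, hNov2 (t (b+1)) (t (a+1)) x,
      ← hstep a, ← hstep b] at h
    have h' := sub_eq_sub_iff_add_eq_add.mp h
    rw [add_comm (t (a+1) * t (b+2))]
    exact h'
  have gconst : ∀ a b, t (a+1) * t (b+1) + t (b+1) * t (a+1)
      = t 1 * t (a+b+1) + t (a+b+1) * t 1 := by
    intro a
    induction a with
    | zero =>
      intro b
      rw [show (0:ℕ)+1 = 1 by omega, show (0:ℕ)+b+1 = b+1 by omega]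
    | succ a IH =>
      intro b
      rw [show a+1+1 = a+2 by omega, show a+1+b+1 = a+(b+1)+1 by omega, hSym a b]
      have e2 := IH (b+1)
      rw [show b+1+1 = b+2 by omega] at e2
      exact e2
  -- symmetric part vanishes at level 2m+2
  have keyA : t 1 * t (2*m+1) + t (2*m+1) * t 1 = 0 := by
    have h := gconst m m
    rw [show m+m+1 = 2*m+1 by omega] at h
    rw [← h, h1, add_zero]
  -- symmetric part vanishes at level 2m+4
  have keyB : t 1 * t (2*m+3) + t (2*m+3) * t 1 = 0 := by
    have h := gconst (m+1) (m+1)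
    rw [show m+1+(m+1)+1 = 2*m+3 by omega] at h
    rw [← h, h2, add_zero]
  have A2 : ∀ a b, a + b = 2*m → t (a+1) * t (b+1) = - (t (b+1) * t (a+1)) := by
    intro a b hab
    have h := gconst a b
    rw [show a+b+1 = 2*m+1 by omega, keyA] at h
    exact eq_neg_of_add_eq_zero_left h
  have A4 : ∀ a b, a + b = 2*m+2 → t (a+1) * t (b+1) = - (t (b+1) * t (a+1)) := by
    intro a b hab
    have h := gconst a b
    rw [show a+b+1 = 2*m+3 by omega, keyB] at h
    exact eq_neg_of_add_eq_zero_left h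
  -- chain of zeros from h1
  have tzn : ∀ a, m + 1 ≤ a → t a * t (m+1) = 0 := by
    intro a ha
    induction a, ha using Nat.le_induction with
    | base => exact h1
    | succ a ha IH =>
      obtain ⟨c, rfl⟩ : ∃ c, a = c + 1 := ⟨a - 1, by omega⟩
      rw [show c+1+1 = c+2 by omega, ← hR c (m+1), IH, zero_mul]
  -- the shifting step at level 2m+4
  have fstep : ∀ c b, c + b = 2*m → t (c+3) * t (b+1) = t (c+1) * t (b+3) := by
    intro c b hcb
    have e1 : t (c+2) * t (b+1) = - (t (b+2) * t (c+1)) := by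
      rw [← hR c (b+1), A2 c b hcb, neg_mul, hR b (c+1)]
    have e2 : t (c+3) * t (b+1) = - (t (b+3) * t (c+1)) := by
      rw [show c+3 = c+1+2 by omega, ← hR (c+1) (b+1), e1, neg_mul,
        hR (b+1) (c+1), show b+1+2 = b+3 by omega]
    rw [e2]
    have e3 := A4 (b+2) c (by omega)
    rw [show b+2+1 = b+3 by omega] at e3
    rw [e3, neg_neg]
  -- all products t c * t b with c + b = 2m+4, c ≤ m+2 vanish
  have fzero : ∀ k c b, c + k = m + 2 → c + b = 2*m+4 → 1 ≤ c → t c * t b = 0 := by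
    intro k
    induction k using Nat.strong_induction_on with
    | _ k IH =>
      intro c b hck hcb hc
      match k, IH with
      | 0, _ =>
        have : c = m+2 := by omega
        subst this
        have : b = m+2 := by omega
        subst this
        exact h2
      | 1, _ =>
        have : c = m+1 := by omega
        subst this
        have : b = m+3 := by omega
        subst this
        have e := A4 m (m+2) (by omega)
        rw [show m+2+1 = m+3 by omega] at e
        rw [e, tzn (m+3) (by omega), neg_zero]
      | (k+2), IH =>
        obtain ⟨c', rfl⟩ : ∃ c', c = c' + 1 := ⟨c - 1, by omega⟩
        obtain ⟨b', rfl⟩ : ∃ b', b = b' + 3 := ⟨b - 3, by omega⟩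
        have hstep' := fstep c' b' (by omega)
        rw [← hstep']
        exact IH k (by omega) (c'+3) (b'+1) (by omega) (by omega) (by omega)
  -- finish
  rw [show 2*(m+1)+2 = 2*m+4 by omega]
  show t (2*m+4) = 0
  have e1 : t (2*m+4) = t (2*m+3) * t 1 := by
    rw [hx, ← hstep (2*m+2)]
  have e2 := A4 (2*m+2) 0 (by omega)
  rw [show 2*m+2+1 = 2*m+3 by omega, show (0:ℕ)+1 = 1 by omega] at e2
  have e3 : t 1 * t (2*m+3) = 0 := fzero (m+1) 1 (2*m+3) (by omega) (by omega) le_rfl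
  rw [e1, e2, e3, neg_zero]
end

section
/- Let A be a Novikov algebra and let I be a right ideal of A such that v^2 = 0 for every v ∈ I (i.e., I is r-nil of index 2). If x ∈ A and x^n ∈ I for some n ≥ 1, where x^k denotes the left-normed power, then x^{2n+2} = 0. -/
section NovAux

variable {A : Type*} [NonUnitalNonAssocRing A]

private lemma nsmul_mul' (k : ℕ) (a b : A) : (k • a) * b = k • (a * b) := by
  induction k with
  | zero => simp
  | succ k ih => rw [succ_nsmul, succ_nsmul, add_mul, ih]

private lemma iterR_nsmul (x : A) (j k : ℕ) (a : A) :
    (· * x)^[j] (k • a) = k • (· * x)^[j] a := by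
  induction j generalizing a with
  | zero => rfl
  | succ j ih =>
      rw [Function.iterate_succ_apply, Function.iterate_succ_apply]
      show (· * x)^[j] ((k • a) * x) = k • (· * x)^[j] (a * x)
      rw [nsmul_mul', ih]

private lemma iterR_sub (x : A) (j : ℕ) (a b : A) :
    (· * x)^[j] (a - b) = (· * x)^[j] a - (· * x)^[j] b := by
  induction j generalizing a b with
  | zero => rfl
  | succ j ih =>
      rw [Function.iterate_succ_apply, Function.iterate_succ_apply,
        Function.iterate_succ_apply]
      show (· * x)^[j] ((a - b) * x) = _
      rw [sub_mul, ih]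

private lemma lpow_iter (x : A) : ∀ k, lpow x (k + 1) = (· * x)^[k] x
  | 0 => rfl
  | (k + 1) => by
      rw [show lpow x (k + 2) = lpow x (k + 1) * x from rfl, lpow_iter x k,
        Function.iterate_succ_apply']

private lemma Dlem (hNov2 : ∀ x y z : A, (x * y) * z = (x * z) * y) (x : A) :
    ∀ m (y : A), lpow x (m + 1) * y = (· * x)^[m] (x * y)
  | 0, y => rfl
  | (m + 1), y => by
      rw [show lpow x (m + 2) = lpow x (m + 1) * x from rfl, hNov2,
        Dlem hNov2 x m y, Function.iterate_succ_apply']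

private lemma clem (hNov1 : ∀ x y z : A, (x * y) * z - x * (y * z) = (y * x) * z - y * (x * z))
    (hNov2 : ∀ x y z : A, (x * y) * z = (x * z) * y) (x : A) :
    ∀ k, x * lpow x (k + 2)
      = (k + 1) • (· * x)^[k] (x * (x * x)) - k • (· * x)^[k + 1] (x * x)
  | 0 => by
      show x * (x * x) = 1 • (x * (x * x)) - 0 • _
      simp
  | (k + 1) => by
      set p := lpow x (k + 2) with hp
      have key : x * (p * x) = (x * p) * x - ((p * x) * x - p * (x * x)) := by
        rw [← hNov1 x p x]; abel
      have e1 : (x * p) * x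
          = (k + 1) • (· * x)^[k + 1] (x * (x * x)) - k • (· * x)^[k + 2] (x * x) := by
        rw [hp, clem hNov1 hNov2 x k, sub_mul, nsmul_mul', nsmul_mul',
          ← Function.iterate_succ_apply' (· * x) k,
          ← Function.iterate_succ_apply' (· * x) (k + 1)]
      have e2 : (p * x) * x = (· * x)^[k + 2] (x * x) := by
        have h4 : (p * x) * x = lpow x (k + 4) := rfl
        rw [h4, lpow_iter x (k + 3), Function.iterate_succ_apply]
      have e3 : p * (x * x) = (· * x)^[k + 1] (x * (x * x)) := by
        rw [hp, Dlem hNov2 x (k + 1)]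
      have hgoal : x * lpow x (k + 3) = x * (p * x) := rfl
      rw [hgoal, key, e1, e2, e3]
      set u := (· * x)^[k + 1] (x * (x * x))
      set v := (· * x)^[k + 2] (x * x)
      rw [succ_nsmul u (k + 1), succ_nsmul v k]
      abel

private lemma sqlem (hNov1 : ∀ x y z : A, (x * y) * z - x * (y * z) = (y * x) * z - y * (x * z))
    (hNov2 : ∀ x y z : A, (x * y) * z = (x * z) * y) (x : A) (k : ℕ) :
    lpow x (k + 2) * lpow x (k + 2)
      = (k + 1) • (· * x)^[2 * k + 1] (x * (x * x)) - k • (· * x)^[2 * k + 2] (x * x) := by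
  rw [show lpow x (k + 2) * lpow x (k + 2) = lpow x ((k + 1) + 1) * lpow x (k + 2) from rfl,
    Dlem hNov2 x (k + 1), clem hNov1 hNov2 x k, iterR_sub, iterR_nsmul, iterR_nsmul,
    ← Function.iterate_add_apply, ← Function.iterate_add_apply,
    show k + 1 + k = 2 * k + 1 by ring, show k + 1 + (k + 1) = 2 * k + 2 by ring]

end NovAux

/-- **Lemma 2.** Let `A` be a Novikov algebra (over a field `F`)
and let `I` be a right ideal of `A` (a subspace with `I·A ⊆ I`) such that
`v² = 0` for every `v ∈ I`.  If `x ∈ A` and `x^n ∈ I` for some `n ≥ 1`, then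
`x^{2n+2} = 0`. -/
theorem novikov_rnil_right_ideal
    (F : Type*) (A : Type*) [Field F] [NonUnitalNonAssocRing A]
    [Module F A] [IsScalarTower F A A] [SMulCommClass F A A]
    (hNov1 : ∀ x y z : A, (x * y) * z - x * (y * z) = (y * x) * z - y * (x * z))
    (hNov2 : ∀ x y z : A, (x * y) * z = (x * z) * y)
    (I : Submodule F A)
    (hIright : ∀ a ∈ I, ∀ b : A, a * b ∈ I)
    (hInil : ∀ v ∈ I, v * v = 0)
    (x : A) (n : ℕ) (hn : 1 ≤ n) (hx : lpow x n ∈ I) :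
    lpow x (2 * n + 2) = 0 := by
  match n, hn with
  | 1, _ =>
      have h0 : x * x = 0 := hInil x hx
      show ((x * x) * x) * x = 0
      rw [h0, zero_mul, zero_mul]
  | (k + 2), _ =>
      have hxk : lpow x (k + 2) ∈ I := hx
      have hxk1 : lpow x (k + 3) ∈ I := hIright _ hxk x
      have hA := hInil _ hxk
      have hB := hInil _ hxk1
      rw [sqlem hNov1 hNov2 x k, sub_eq_zero] at hA
      rw [show lpow x (k + 3) = lpow x ((k + 1) + 2) from rfl,
        sqlem hNov1 hNov2 x (k + 1), sub_eq_zero] at hB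
      -- apply R twice to hA
      have hA2 : (k + 1) • (· * x)^[2 * k + 3] (x * (x * x))
          = k • (· * x)^[2 * k + 4] (x * x) := by
        have := congrArg ((· * x)^[2]) hA
        rwa [iterR_nsmul, iterR_nsmul, ← Function.iterate_add_apply,
          ← Function.iterate_add_apply,
          show 2 + (2 * k + 1) = 2 * k + 3 by ring,
          show 2 + (2 * k + 2) = 2 * k + 4 by ring] at this
      have hB2 : (k + 2) • (· * x)^[2 * k + 3] (x * (x * x))
          = (k + 1) • (· * x)^[2 * k + 4] (x * x) := by
        rwa [show 2 * (k + 1) + 1 = 2 * k + 3 by ring,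
          show 2 * (k + 1) + 2 = 2 * k + 4 by ring, show k + 1 + 1 = k + 2 by ring] at hB
      set u := (· * x)^[2 * k + 3] (x * (x * x)) with hu
      set v := (· * x)^[2 * k + 4] (x * x) with hv
      have c1 : ((k + 2) * (k + 1)) • u = ((k + 2) * k) • v := by
        rw [mul_smul, mul_smul, hA2]
      have c2 : ((k + 1) * (k + 2)) • u = ((k + 1) * (k + 1)) • v := by
        rw [mul_smul, mul_smul, hB2]
      have c3 : ((k + 2) * k) • v = ((k + 1) * (k + 1)) • v := by
        rw [← c1, ← c2, mul_comm (k + 2) (k + 1)]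
      have c4 : ((k + 2) * k) • v = ((k + 2) * k) • v + v := by
        rw [show (k + 1) * (k + 1) = (k + 2) * k + 1 by ring, succ_nsmul] at c3
        exact c3
      have hv0 : v = 0 := by
        have := c4.symm
        rwa [add_eq_left] at this
      have final : lpow x (2 * (k + 2) + 2) = v := by
        rw [show 2 * (k + 2) + 2 = (2 * k + 5) + 1 by ring, lpow_iter x (2 * k + 5),
          hv, Function.iterate_succ_apply]
      rw [final, hv0]
end

section
/- Let A be a Novikov algebra, I a two-sided ideal of A, and x ∈ A with x^n ∈ I for some n ≥ 1, where x^k denotes the left-normed power. Define s_1 = n and s_{k+1} = 2·s_k + 2. Then for every k ≥ 1, x^{s_k} ∈ I^{[k]}, where I^{[1]} = I and I^{[k+1]} = I^{[k]}·I is the span of products of elements of I^{[k]} with elements of I. -/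
/-- Right powers of an ideal: `rPow F I 1 = I` and
`rPow F I (k+1) = span (rPow F I k · I)` (the value at `0` is a junk value). -/
def rPow (F : Type*) {A : Type*} [Field F] [NonUnitalNonAssocRing A]
    [Module F A] (I : Submodule F A) : ℕ → Submodule F A
  | 0 => ⊥
  | 1 => I
  | (k + 2) =>
      Submodule.span F {z : A | ∃ a ∈ rPow F I (k + 1), ∃ b ∈ I, a * b = z}

/-- The sequence `s 1 = n`, `s (k+1) = 2 * s k + 2`
(the value at `0` is a junk value). -/
def sSeq (n : ℕ) : ℕ → ℕ
  | 0 => 0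
  | 1 => n
  | (k + 2) => 2 * sSeq n (k + 1) + 2

section NovAux

variable {A : Type*} [NonUnitalNonAssocRing A]

lemma lpow_succ' (x : A) (a : ℕ) (ha : 1 ≤ a) :
    lpow x (a + 1) = lpow x a * x := by
  obtain ⟨a, rfl⟩ : ∃ a', a = a' + 1 := ⟨a - 1, by omega⟩
  rfl

lemma lpow_S (hNov2 : ∀ x y z : A, (x * y) * z = (x * z) * y)
    (x : A) (a b : ℕ) (ha : 1 ≤ a) :
    lpow x (a + 1) * lpow x b = (lpow x a * lpow x b) * x := by
  rw [lpow_succ' x a ha, hNov2]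

lemma lpow_N
    (hNov1 : ∀ x y z : A, (x * y) * z - x * (y * z) = (y * x) * z - y * (x * z))
    (hNov2 : ∀ x y z : A, (x * y) * z = (x * z) * y)
    (x : A) (a b : ℕ) (ha : 1 ≤ a) (hb : 1 ≤ b) :
    lpow x a * lpow x (b + 1) - lpow x (a + 1) * lpow x b
      = lpow x b * lpow x (a + 1) - lpow x (b + 1) * lpow x a := by
  have h := hNov1 (lpow x a) (lpow x b) x
  rw [hNov2 (lpow x a) (lpow x b) x, hNov2 (lpow x b) (lpow x a) x,
    ← lpow_succ' x a ha, ← lpow_succ' x b hb] at h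
  rw [← neg_sub (lpow x (a + 1) * lpow x b) (lpow x a * lpow x (b + 1)), h, neg_sub]

lemma lpow_wstep (hNov2 : ∀ x y z : A, (x * y) * z = (x * z) * y)
    (x : A) (a b : ℕ) (ha : 1 ≤ a) :
    lpow x (a + 1) * lpow x (b + 1) - lpow x (a + 2) * lpow x b
      = (lpow x a * lpow x (b + 1) - lpow x (a + 1) * lpow x b) * x := by
  rw [sub_mul, ← lpow_S hNov2 x a (b + 1) ha, ← lpow_S hNov2 x (a + 1) b (by omega)]

lemma lpow_wconst
    (hNov1 : ∀ x y z : A, (x * y) * z - x * (y * z) = (y * x) * z - y * (x * z))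
    (hNov2 : ∀ x y z : A, (x * y) * z = (x * z) * y)
    (x : A) : ∀ r a b : ℕ, 1 ≤ a → 1 ≤ b → a + b = r + 2 →
    lpow x a * lpow x (b + 1) - lpow x (a + 1) * lpow x b
      = lpow x 1 * lpow x (r + 2) - lpow x 2 * lpow x (r + 1) := by
  intro r
  induction r using Nat.strong_induction_on with
  | _ r IH =>
    intro a b ha hb hab
    rcases Nat.lt_or_ge a 2 with ha2 | ha2
    · obtain rfl : a = 1 := by omega
      obtain rfl : b = r + 1 := by omega
      rfl
    · obtain ⟨a', rfl⟩ : ∃ a', a = a' + 2 := ⟨a - 2, by omega⟩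
      obtain ⟨r', rfl⟩ : ∃ r', r = r' + 1 := ⟨r - 1, by omega⟩
      have h1 := lpow_wstep hNov2 x (a' + 1) b (by omega)
      have h2 := IH r' (by omega) (a' + 1) b (by omega) hb (by omega)
      have h3 := lpow_N hNov1 hNov2 x 1 (r' + 2) (by omega) (by omega)
      have h4 := lpow_wstep hNov2 x (r' + 1) 1 (by omega)
      have h5 := IH r' (by omega) (r' + 1) 1 (by omega) (by omega) (by omega)
      -- goal: w(a'+2,b) = c 1 (r'+3) - c 2 (r'+2)
      calc lpow x (a' + 2) * lpow x (b + 1) - lpow x (a' + 2 + 1) * lpow x b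
          = (lpow x (a' + 1) * lpow x (b + 1) - lpow x (a' + 1 + 1) * lpow x b) * x := h1
        _ = (lpow x 1 * lpow x (r' + 2) - lpow x 2 * lpow x (r' + 1)) * x := by rw [h2]
        _ = (lpow x (r' + 1) * lpow x 2 - lpow x (r' + 2) * lpow x 1) * x := by
              rw [← h5]
        _ = lpow x (r' + 2) * lpow x 2 - lpow x (r' + 3) * lpow x 1 := (h4).symm
        _ = lpow x 1 * lpow x (r' + 3) - lpow x 2 * lpow x (r' + 2) := by
              rw [h3]

lemma lpow_split
    (hNov1 : ∀ x y z : A, (x * y) * z - x * (y * z) = (y * x) * z - y * (x * z))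
    (hNov2 : ∀ x y z : A, (x * y) * z = (x * z) * y)
    (x : A) : ∀ b a r : ℕ, 1 ≤ a → a + b = r + 1 →
    lpow x a * lpow x (b + 1)
      = lpow x (r + 2) + b • (lpow x 1 * lpow x (r + 1) - lpow x 2 * lpow x r) := by
  intro b
  induction b with
  | zero =>
    intro a r ha h
    obtain rfl : a = r + 1 := by omega
    have : lpow x (r + 1) * lpow x 1 = lpow x (r + 2) := (lpow_succ' x (r + 1) (by omega)).symm
    simpa using this
  | succ b IHb =>
    intro a r ha h
    obtain ⟨r', rfl⟩ : ∃ r', r = r' + 1 := ⟨r - 1, by omega⟩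
    have hw := lpow_wconst hNov1 hNov2 x r' a (b + 1) ha (by omega) (by omega)
    have hI := IHb (a + 1) (r' + 1) (by omega) (by omega)
    have hgoal : lpow x a * lpow x (b + 2)
        = lpow x (a + 1) * lpow x (b + 1)
          + (lpow x 1 * lpow x (r' + 2) - lpow x 2 * lpow x (r' + 1)) := by
      rw [← hw]; abel
    rw [hgoal, hI, succ_nsmul]
    abel

end NovAux

section MemAux

variable {F : Type*} {A : Type*} [Field F] [NonUnitalNonAssocRing A]
    [Module F A] [IsScalarTower F A A] [SMulCommClass F A A]

lemma rPow_mul_mem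
    (hNov2 : ∀ x y z : A, (x * y) * z = (x * z) * y)
    (I : Submodule F A) (hIright : ∀ a ∈ I, ∀ b : A, a * b ∈ I) :
    ∀ k : ℕ, ∀ a ∈ rPow F I k, ∀ c : A, a * c ∈ rPow F I k := by
  intro k
  induction k with
  | zero =>
    intro a ha c
    simp only [rPow, Submodule.mem_bot] at ha ⊢
    rw [ha, zero_mul]
  | succ k IH =>
    match k with
    | 0 => exact fun a ha c => hIright a ha c
    | k + 1 =>
      intro a ha c
      show a * c ∈ Submodule.span F {z : A | ∃ a ∈ rPow F I (k + 1), ∃ b ∈ I, a * b = z}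
      refine Submodule.span_induction
        (p := fun z _ => z * c ∈
          Submodule.span F {z : A | ∃ a ∈ rPow F I (k + 1), ∃ b ∈ I, a * b = z})
        ?_ ?_ ?_ ?_ ha
      · rintro z ⟨u, hu, v, hv, rfl⟩
        refine Submodule.subset_span ⟨u * c, IH u hu c, v, hv, ?_⟩
        exact (hNov2 u v c).symm
      · show (0:A) * c ∈ Submodule.span F {z : A | ∃ a ∈ rPow F I (k + 1), ∃ b ∈ I, a * b = z}
        rw [zero_mul]; exact Submodule.zero_mem _
      · intro y z _ _ hy hz
        rw [add_mul]; exact Submodule.add_mem _ hy hz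
      · intro r y _ hy
        rw [smul_mul_assoc]; exact Submodule.smul_mem _ r hy

lemma lpow_add_mem (J : Submodule F A) (hJ : ∀ a ∈ J, ∀ c : A, a * c ∈ J)
    (x : A) (m : ℕ) (hm1 : 1 ≤ m) (hm : lpow x m ∈ J) :
    ∀ j : ℕ, lpow x (m + j) ∈ J := by
  intro j
  induction j with
  | zero => exact hm
  | succ j IH =>
    show lpow x (m + j + 1) ∈ J
    rw [lpow_succ' x (m + j) (by omega)]
    exact hJ _ IH x

end MemAux

lemma sSeq_le (n : ℕ) (hn : 1 ≤ n) : ∀ k : ℕ, n ≤ sSeq n (k + 1) := by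
  intro k
  induction k with
  | zero => exact le_refl n
  | succ k IH =>
    show n ≤ 2 * sSeq n (k + 1) + 2
    omega

/-- **Theorem 1, first part.** Let `A` be a Novikov algebra (over
a field `F`), `I` a two-sided ideal of `A`, and `x ∈ A` with `x^n ∈ I` for some
`n ≥ 1`.  With `s₁ = n` and `s_{k+1} = 2·s_k + 2`, we have `x^{s_k} ∈ I^{[k]}`
for every `k ≥ 1`. -/
theorem novikov_lpow_mem_ideal_rpow
    (F : Type*) (A : Type*) [Field F] [NonUnitalNonAssocRing A]
    [Module F A] [IsScalarTower F A A] [SMulCommClass F A A]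
    (hNov1 : ∀ x y z : A, (x * y) * z - x * (y * z) = (y * x) * z - y * (x * z))
    (hNov2 : ∀ x y z : A, (x * y) * z = (x * z) * y)
    (I : Submodule F A)
    (hIright : ∀ a ∈ I, ∀ b : A, a * b ∈ I)
    (hIleft : ∀ a ∈ I, ∀ b : A, b * a ∈ I)
    (x : A) (n : ℕ) (hn : 1 ≤ n) (hx : lpow x n ∈ I) :
    ∀ k : ℕ, 1 ≤ k → lpow x (sSeq n k) ∈ rPow F I k := by
  obtain ⟨n₀, rfl⟩ : ∃ n₀, n = n₀ + 1 := ⟨n - 1, by omega⟩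
  intro k hk
  obtain ⟨k, rfl⟩ : ∃ k', k = k' + 1 := ⟨k - 1, by omega⟩
  clear hk
  induction k with
  | zero => exact hx
  | succ k IH =>
    set n : ℕ := n₀ + 1 with hn₀
    have hmn : n ≤ sSeq n (k + 1) := sSeq_le n hn k
    set m : ℕ := sSeq n (k + 1) with hmdef
    have hmem : lpow x m ∈ rPow F I (k + 1) := IH
    have hm1 : 1 ≤ m := le_trans hn hmn
    obtain ⟨t, hmt⟩ : ∃ t, m = n + t := ⟨m - n, by omega⟩
    have hJ : ∀ a ∈ rPow F I (k + 1), ∀ c : A, a * c ∈ rPow F I (k + 1) :=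
      rPow_mul_mem hNov2 I hIright (k + 1)
    -- the two split identities at total degree 2m+2
    have h1 := lpow_split hNov1 hNov2 x n₀ (m + t + 2) (2 * m) (by omega) (by omega)
    have h2 := lpow_split hNov1 hNov2 x (n₀ + 1) (m + t + 1) (2 * m) (by omega) (by omega)
    have hW : lpow x (m + t + 1) * lpow x (n₀ + 2) - lpow x (m + t + 2) * lpow x (n₀ + 1)
        = lpow x 1 * lpow x (2 * m + 1) - lpow x 2 * lpow x (2 * m) := by
      rw [h1, h2, succ_nsmul]; abel
    have key : lpow x (2 * m + 2)
        = lpow x (m + t + 2) * lpow x (n₀ + 1)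
          - n₀ • (lpow x (m + t + 1) * lpow x (n₀ + 2)
              - lpow x (m + t + 2) * lpow x (n₀ + 1)) := by
      rw [hW, h1]; abel
    have hs : sSeq n (k + 1 + 1) = 2 * m + 2 := rfl
    rw [hs, key]
    -- membership
    have g1 : lpow x (m + t + 2) * lpow x (n₀ + 1) ∈ rPow F I (k + 2) := by
      refine Submodule.subset_span ⟨lpow x (m + t + 2), ?_, lpow x (n₀ + 1), hx, rfl⟩
      exact lpow_add_mem (rPow F I (k + 1)) hJ x m hm1 hmem (t + 2)
    have g2 : lpow x (m + t + 1) * lpow x (n₀ + 2) ∈ rPow F I (k + 2) := by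
      refine Submodule.subset_span ⟨lpow x (m + t + 1), ?_, lpow x (n₀ + 2), ?_, rfl⟩
      · exact lpow_add_mem (rPow F I (k + 1)) hJ x m hm1 hmem (t + 1)
      · exact hIright _ hx x
    exact sub_mem g1 (nsmul_mem (sub_mem g2 g1) n₀)
end

section
/- Let A be a Novikov algebra which is locally solvable, i.e., every finitely generated subalgebra B of A is solvable (B^{(m)} = 0 for some m, where B^{(0)} = B and B^{(k+1)} is the span of products of pairs of elements of B^{(k)}). Then A is r-nil: for every x ∈ A there exists n ≥ 1 such that the left-normed power x^n = 0. -/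
/-- The derived series of a subspace `S`: `derSer F S 0 = S` and
`derSer F S (k+1)` is the span of products of pairs of elements of
`derSer F S k`. -/
def derSer (F : Type*) {A : Type*} [Field F] [NonUnitalNonAssocRing A]
    [Module F A] (S : Submodule F A) : ℕ → Submodule F A
  | 0 => S
  | (k + 1) =>
      Submodule.span F
        {z : A | ∃ a ∈ derSer F S k, ∃ b ∈ derSer F S k, a * b = z}

/-- Key three-variable Novikov identity:
`((u*x)*x)*v + u*((v*x)*x) = 2 (u*x)*(v*x)`. -/
theorem novikov_key {A : Type*} [NonUnitalNonAssocRing A]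
    (hNov1 : ∀ x y z : A, (x * y) * z - x * (y * z) = (y * x) * z - y * (x * z))
    (hNov2 : ∀ x y z : A, (x * y) * z = (x * z) * y)
    (u v x : A) :
    ((u*x)*x)*v + u*((v*x)*x) = (u*x)*(v*x) + (u*x)*(v*x) := by
  have h1 := hNov2 v x (u*x)
  have h2 := hNov1 (v*x) u x
  have h3 := hNov2 u x (v*x)
  have h4 := hNov2 (u*x) x v
  have h5 : ((v*x)*u)*x = ((v*u)*x)*x := by rw [hNov2 v x u]
  have h6 : ((v*u)*x)*x - (v*(u*x))*x = ((u*v)*x)*x - (u*(v*x))*x := by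
    have h := congrArg (· * x) (hNov1 v u x)
    simpa [sub_mul] using h
  have h7 : ((u*x)*v)*x = ((u*v)*x)*x := by rw [hNov2 u x v]
  linear_combination (norm := abel1) h1 + h2 - h3 - h3 + h4 - h5 - h6 + h7

theorem lpow_succ_eq {A : Type*} [Mul A] [Zero A] (x : A) (n : ℕ) (hn : 1 ≤ n) :
    lpow x (n + 1) = lpow x n * x := by
  obtain ⟨k, rfl⟩ := Nat.exists_eq_succ_of_ne_zero (by omega : n ≠ 0)
  rfl

/-- `x^{a+2} x^b + x^a x^{b+2} = 2 x^{a+1} x^{b+1}`. -/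
theorem novikov_Pstep {A : Type*} [NonUnitalNonAssocRing A]
    (hNov1 : ∀ x y z : A, (x * y) * z - x * (y * z) = (y * x) * z - y * (x * z))
    (hNov2 : ∀ x y z : A, (x * y) * z = (x * z) * y)
    (x : A) (a b : ℕ) (ha : 1 ≤ a) (hb : 1 ≤ b) :
    lpow x (a+2) * lpow x b + lpow x a * lpow x (b+2)
      = lpow x (a+1) * lpow x (b+1) + lpow x (a+1) * lpow x (b+1) := by
  have key := novikov_key hNov1 hNov2 (lpow x a) (lpow x b) x
  rw [show a+2 = (a+1)+1 from rfl, lpow_succ_eq x (a+1) (by omega),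
      lpow_succ_eq x a ha,
      show b+2 = (b+1)+1 from rfl, lpow_succ_eq x (b+1) (by omega),
      lpow_succ_eq x b hb]
  exact key

/-- `(c+1) • (x^{a+1} x^{c+1}) = x^{a+c+2} + c • (x^a x^{c+2})`. -/
theorem novikov_formula {A : Type*} [NonUnitalNonAssocRing A]
    (hNov1 : ∀ x y z : A, (x * y) * z - x * (y * z) = (y * x) * z - y * (x * z))
    (hNov2 : ∀ x y z : A, (x * y) * z = (x * z) * y)
    (x : A) :
    ∀ c a : ℕ, 1 ≤ a →
      (c + 1) • (lpow x (a+1) * lpow x (c+1))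
        = lpow x (a+c+2) + c • (lpow x a * lpow x (c+2)) := by
  intro c
  induction c with
  | zero =>
      intro a ha
      show (1:ℕ) • (lpow x (a+1) * lpow x 1) = lpow x (a+2) + 0 • (lpow x a * lpow x 2)
      rw [one_smul, zero_smul, add_zero]
      rfl
  | succ c ih =>
      intro a ha
      have hP' := novikov_Pstep hNov1 hNov2 x a (c+1) ha (by omega)
      have hIH := ih (a+1) (by omega)
      rw [show a+1+c+2 = a+c+3 from by omega] at hIH
      -- abbreviations (all index arithmetic below is definitional)
      show (c+2) • (lpow x (a+1) * lpow x (c+2))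
        = lpow x (a+c+3) + (c+1) • (lpow x a * lpow x (c+3))
      set P1 : A := lpow x (a+1) * lpow x (c+2) with hP1def
      set P2 : A := lpow x (a+2) * lpow x (c+1) with hP2def
      set P3 : A := lpow x a * lpow x (c+3) with hP3def
      set X : A := lpow x (a+c+3) with hXdef
      have hP : P2 + P3 = P1 + P1 := hP'
      have hIH' : (c+1) • P2 = X + c • P1 := hIH
      have h3 : (c+1) • P2 + (c+1) • P3 = (c+1) • P1 + (c+1) • P1 := by
        rw [← smul_add, hP, smul_add]
      have main : (c+2) • P1 + c • P1 = (X + (c+1) • P3) + c • P1 := by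
        calc (c+2) • P1 + c • P1
            = (c+1) • P1 + (c+1) • P1 := by
              rw [← add_smul, ← add_smul]; congr 1; omega
          _ = (c+1) • P2 + (c+1) • P3 := h3.symm
          _ = (X + c • P1) + (c+1) • P3 := by rw [hIH']
          _ = (X + (c+1) • P3) + c • P1 := by abel
      exact add_right_cancel main

/-- A locally solvable Novikov algebra (every finitely
generated subalgebra is solvable) is r-nil: every element has a vanishing
left-normed power. -/
theorem novikov_locallySolvable_rnil
    (F : Type*) (A : Type*) [Field F] [NonUnitalNonAssocRing A]
    [Module F A] [IsScalarTower F A A] [SMulCommClass F A A]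
    (hNov1 : ∀ x y z : A, (x * y) * z - x * (y * z) = (y * x) * z - y * (x * z))
    (hNov2 : ∀ x y z : A, (x * y) * z = (x * z) * y)
    (hLocSolv : ∀ B : NonUnitalSubalgebra F A,
      (∃ s : Finset A, B = NonUnitalAlgebra.adjoin F (s : Set A)) →
      ∃ m : ℕ, derSer F (B.toSubmodule) m = ⊥) :
    ∀ x : A, ∃ n : ℕ, 1 ≤ n ∧ lpow x n = 0 := by
  intro x
  set B := NonUnitalAlgebra.adjoin F ({x} : Set A) with hB
  have hxB : x ∈ B := NonUnitalAlgebra.self_mem_adjoin_singleton F x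
  have hpow : ∀ n, 1 ≤ n → lpow x n ∈ B := by
    intro n
    induction n with
    | zero => exact fun h => absurd h (by omega)
    | succ k ih =>
        intro _
        rcases Nat.eq_zero_or_pos k with hk | hk
        · subst hk; exact hxB
        · rw [lpow_succ_eq x k hk]; exact mul_mem (ih hk) hxB
  have claim : ∀ k n, 2^(k+1) ≤ n + 1 → lpow x n ∈ derSer F B.toSubmodule k := by
    intro k
    induction k with
    | zero =>
        intro n hn
        have h2 : (2:ℕ)^(0+1) = 2 := by norm_num
        have hn1 : 1 ≤ n := by omega
        show lpow x n ∈ B.toSubmodule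
        exact (NonUnitalSubalgebra.mem_toSubmodule B).mpr (hpow n hn1)
    | succ k ih =>
        intro n hn
        have hpos : 1 ≤ 2^k := Nat.one_le_two_pow
        obtain ⟨d, hd⟩ : ∃ d, 2^(k+1) = d + 2 := by
          refine ⟨2^(k+1) - 2, ?_⟩
          have : (2:ℕ)^(k+1) = 2^k * 2 := pow_succ 2 k
          omega
        have hkk : (2:ℕ)^(k+2) = (d+2)*2 := by
          rw [pow_succ, hd]
        have hna : 2*d + 3 ≤ n := by omega
        set a := n - d - 2 with hadef
        have haeq : a + d + 2 = n := by omega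
        have had : d + 1 ≤ a := by omega
        have ha1 : 1 ≤ a := by omega
        -- memberships for the four powers at level k
        have m1 : lpow x (a+1) ∈ derSer F B.toSubmodule k := ih (a+1) (by omega)
        have m2 : lpow x (d+1) ∈ derSer F B.toSubmodule k := ih (d+1) (by omega)
        have m3 : lpow x a ∈ derSer F B.toSubmodule k := ih a (by omega)
        have m4 : lpow x (d+2) ∈ derSer F B.toSubmodule k := ih (d+2) (by omega)
        have prod1 : lpow x (a+1) * lpow x (d+1) ∈ derSer F B.toSubmodule (k+1) :=
          Submodule.subset_span ⟨_, m1, _, m2, rfl⟩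
        have prod2 : lpow x a * lpow x (d+2) ∈ derSer F B.toSubmodule (k+1) :=
          Submodule.subset_span ⟨_, m3, _, m4, rfl⟩
        have form := novikov_formula hNov1 hNov2 x d a ha1
        have hxn : lpow x n
            = (d+1) • (lpow x (a+1) * lpow x (d+1)) - d • (lpow x a * lpow x (d+2)) := by
          rw [← haeq]
          exact eq_sub_of_add_eq form.symm
        rw [hxn]
        exact sub_mem (nsmul_mem prod1 _) (nsmul_mem prod2 _)
  obtain ⟨m, hm⟩ := hLocSolv B ⟨{x}, by rw [hB, Finset.coe_singleton]⟩
  refine ⟨2^(m+1), Nat.one_le_two_pow, ?_⟩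
  have hmem := claim m (2^(m+1)) (Nat.le_succ _)
  rw [hm] at hmem
  simpa using hmem
end

section
/- Let A be a Novikov algebra and let x, y, v ∈ A satisfy x + y − y·x = −v, v·v = 0, v·(y·x − x·y) = 0, and (v,v,y) = 0, where (a,b,c) = (a·b)·c − a·(b·c). Then the element w = y + v − v·y + (v,y,y) satisfies x + w − w·x = 0; in particular, x is left-quasiregular. -/
/-- **key computation in Lemma 5.** Let `A` be a Novikov
algebra and `x, y, v ∈ A` with `x + y − y·x = −v`, `v·v = 0`,
`v·(y·x − x·y) = 0` and `(v,v,y) = 0`.  Then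
`w = y + v − v·y + (v,y,y)` satisfies `x + w − w·x = 0`; in particular `x` is
left-quasiregular. -/
theorem novikov_quasiinverse_correction
    (A : Type*) [NonUnitalNonAssocRing A]
    (hNov1 : ∀ x y z : A, (x * y) * z - x * (y * z) = (y * x) * z - y * (x * z))
    (hNov2 : ∀ x y z : A, (x * y) * z = (x * z) * y)
    (x y v : A)
    (hxyv : x + y - y * x = -v)
    (hv2 : v * v = 0)
    (hvcomm : v * (y * x - x * y) = 0)
    (hvvy : (v * v) * y - v * (v * y) = 0) :
    (x + (y + v - v * y + ((v * y) * y - v * (y * y)))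
        - (y + v - v * y + ((v * y) * y - v * (y * y))) * x = 0) ∧
    (∃ w : A, x + w = w * x) := by
  have hyx : y * x = x + y + v := by
    have h1 : x + y + v - y * x = (x + y - y * x) - (-v) := by abel
    rw [hxyv, sub_self] at h1
    exact (sub_eq_zero.mp h1).symm
  have key : x + (y + v - v * y + ((v * y) * y - v * (y * y)))
        - (y + v - v * y + ((v * y) * y - v * (y * y))) * x
      = -(((y * v) * y) * x - ((y * v) * x) * y)
        + ((y * (v * y)) * x - (y * x) * (v * y))
        + (((v * y) * y - v * (y * y)) - ((y * v) * y - y * (v * y)))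
        - (((v * y) * y - v * (y * y)) * x - ((y * v) * y - y * (v * y)) * x)
        + ((v * y) * x - (v * x) * y)
        + (((v * x) * y - v * (x * y)) - ((x * v) * y - x * (v * y)))
        - (((y * v) * x) * y - ((y * x) * v) * y)
        - ((v * v) * y - v * (v * y))
        - (v * (y * x - x * y))
        + (v * v)
        + ((x + y - y * x) - (-v))
        + ((y * x) * (v * y) - (x + y + v) * (v * y))
        - (((y * x) * v) * y - ((x + y + v) * v) * y)
        + (v * (y * x) - v * (x + y + v)) := by
    simp only [add_mul, mul_add, sub_mul, mul_sub, neg_mul, mul_neg]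
    abel
  have main : x + (y + v - v * y + ((v * y) * y - v * (y * y)))
        - (y + v - v * y + ((v * y) * y - v * (y * y))) * x = 0 := by
    rw [key, hvcomm, hvvy, hv2, hxyv, hNov2 (y * v) y x, hNov2 y (v * y) x,
      hNov1 v y y, hNov2 v y x, hNov1 v x y, hNov2 y v x, hyx]
    abel
  exact ⟨main, ⟨y + v - v * y + ((v * y) * y - v * (y * y)),
    by rw [← sub_eq_zero]; calc x + (y + v - v * y + ((v * y) * y - v * (y * y)))
          - (y + v - v * y + ((v * y) * y - v * (y * y))) * x = _ := main⟩⟩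
end

section
/- Let B be a commutative associative (not necessarily unital) algebra with a derivation d, and suppose B is quasiregular: for every b ∈ B there exists z ∈ B with b + z − b·z = 0. Then the Gelfand–Dorfman algebra GD(B,d) with multiplication x∘y = x·d(y) is left-quasiregular: for every x ∈ B there exists w ∈ B with x + w − w·d(x) = 0; explicitly, if d(x) + z − d(x)·z = 0 then w = x·z − x works. -/
/-- Let `B` be a commutative associative (not necessarily
unital) quasiregular algebra with a derivation `d`.  Then the Gelfand–Dorfman
algebra `GD(B,d)` (with multiplication `x∘y = x·d(y)`) is left-quasiregular;
explicitly, if `d(x) + z − d(x)·z = 0` then `w = x·z − x` is a left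
quasi-inverse of `x`. -/
theorem gelfandDorfman_left_quasiregular
    (F : Type*) (B : Type*) [Field F] [NonUnitalCommRing B]
    [Module F B] [IsScalarTower F B B] [SMulCommClass F B B]
    (d : B →ₗ[F] B)
    (hd : ∀ a b : B, d (a * b) = d a * b + a * d b)
    (hqr : ∀ b : B, ∃ z : B, b + z - b * z = 0) :
    (∀ x : B, ∃ w : B, x + w - w * d x = 0) ∧
    (∀ x z : B, d x + z - d x * z = 0 →
      x + (x * z - x) - (x * z - x) * d x = 0) := by
  have key : ∀ x z : B, d x + z - d x * z = 0 →
      x + (x * z - x) - (x * z - x) * d x = 0 := by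
    intro x z hz
    have h := congrArg (fun t => x * t) hz
    simp only [mul_add, mul_sub, mul_zero] at h
    have h2 : x * z * d x = x * (d x * z) := by
      rw [mul_assoc, mul_comm z]
    calc x + (x * z - x) - (x * z - x) * d x
        = x * d x + x * z - x * (d x * z) := by rw [sub_mul, h2]; abel
      _ = 0 := h
  refine ⟨fun x => ?_, key⟩
  obtain ⟨z, hz⟩ := hqr (d x)
  exact ⟨x * z - x, key x z hz⟩
end

section
/- Let F be a field of characteristic 0 and let f, g ∈ F[X] be polynomials with f(0) = 0 and g(0) ≠ 0. Then X·g² + f·g − X²·(f′·g − f·g′) ≠ 0, where f′ denotes the formal derivative of f. -/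
open Polynomial

/-- **Example 2.** Let `F` be a field of characteristic `0` and
`f, g ∈ F[X]` with `f(0) = 0` and `g(0) ≠ 0`.  Then
`X·g² + f·g − X²·(f′·g − f·g′) ≠ 0`. -/
theorem example2_polynomial_nonzero
    (F : Type*) [Field F] [CharZero F]
    (f g : Polynomial F) (hf : f.eval 0 = 0) (hg : g.eval 0 ≠ 0) :
    X * g ^ 2 + f * g - X ^ 2 * (derivative f * g - f * derivative g) ≠ 0 := by
  intro h
  have hg0 : g ≠ 0 := fun hz => hg (by simp [hz])
  by_cases hf0 : f = 0
  · subst hf0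
    simp only [zero_mul, mul_zero, derivative_zero, sub_zero, add_zero] at h
    exact (mul_ne_zero X_ne_zero (pow_ne_zero 2 hg0)) h
  set m := f.natDegree with hm
  set n := g.natDegree with hn
  have hm1 : 1 ≤ m := by
    rcases Nat.eq_zero_or_pos m with h0 | h1
    · exact absurd (by rw [eq_C_of_natDegree_eq_zero h0, coeff_zero_eq_eval_zero, hf, map_zero])
        hf0
    · exact h1
  set a := f.coeff m with ha
  set b := g.coeff n with hb
  have ha0 : a ≠ 0 := mt leadingCoeff_eq_zero.mp hf0
  have hb0 : b ≠ 0 := mt leadingCoeff_eq_zero.mp hg0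
  set h2 := derivative f * g - f * derivative g with hh2
  have hc : ∀ k, (X * g ^ 2 + f * g - X ^ 2 * h2).coeff k = 0 := by
    intro k; rw [h]; simp
  -- derivative facts
  have hdf : (derivative f).natDegree = m - 1 := by
    have := degree_derivative_eq f (by omega)
    exact natDegree_eq_of_degree_eq_some this
  have hdfc : (derivative f).coeff (m - 1) = a * m := by
    rw [coeff_derivative]
    have e : m - 1 + 1 = m := by omega
    rw [e, Nat.cast_sub hm1]
    push_cast; ring
  -- coefficient of h2 at m+n-1 equals a*b*m - a*b*n
  have hkey : h2.coeff (m + n - 1) = a * b * m - a * b * n := by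
    have h1 : (derivative f * g).coeff (m + n - 1) = a * b * m := by
      have e : m + n - 1 = (derivative f).natDegree + g.natDegree := by
        rw [hdf]; omega
      rw [e, coeff_mul_degree_add_degree, leadingCoeff, leadingCoeff, hdf, hdfc, ← hb]
      ring
    rcases Nat.eq_zero_or_pos n with hn0 | hn1
    · have : derivative g = 0 := derivative_of_natDegree_zero hn0
      rw [hh2, coeff_sub, h1, this, mul_zero, coeff_zero, hn0]
      push_cast; ring
    · have hdg : (derivative g).natDegree = n - 1 := by
        have := degree_derivative_eq g (by omega)
        exact natDegree_eq_of_degree_eq_some this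
      have hdgc : (derivative g).coeff (n - 1) = b * n := by
        rw [coeff_derivative]
        have e : n - 1 + 1 = n := by omega
        rw [e, Nat.cast_sub hn1]
        push_cast; ring
      have h2' : (f * derivative g).coeff (m + n - 1) = a * b * n := by
        have e : m + n - 1 = f.natDegree + (derivative g).natDegree := by
          rw [hdg]; omega
        rw [e, coeff_mul_degree_add_degree, leadingCoeff, leadingCoeff, hdg, hdgc, ← ha]
        ring
      rw [hh2, coeff_sub, h1, h2']
  rcases le_or_gt m n with hmn | hmn
  · -- coefficient at 2n+1 is b^2 - (coeff h2 (2n-1))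
    have hN := hc (2 * n + 1)
    have c1 : (X * g ^ 2).coeff (2 * n + 1) = b * b := by
      rw [coeff_X_mul]
      have : g ^ 2 = g * g := sq g
      rw [this, two_mul, coeff_mul_degree_add_degree]
      rfl
    have c2 : (f * g).coeff (2 * n + 1) = 0 := by
      apply coeff_eq_zero_of_natDegree_lt
      calc (f * g).natDegree ≤ m + n := natDegree_mul_le
        _ < 2 * n + 1 := by omega
    have c3 : (X ^ 2 * h2).coeff (2 * n + 1) = h2.coeff (2 * n - 1) := by
      have e : X ^ 2 * h2 = X * (X * h2) := by ring
      have e2 : 2 * n + 1 = (2 * n - 1) + 1 + 1 := by omega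
      rw [e, e2, coeff_X_mul, coeff_X_mul]
    have c4 : h2.coeff (2 * n - 1) = 0 := by
      rcases eq_or_lt_of_le hmn with he | hlt
      · have : 2 * n - 1 = m + n - 1 := by omega
        rw [this, hkey, he]; ring
      · apply coeff_eq_zero_of_natDegree_lt
        have d1 : (derivative f * g).natDegree ≤ m - 1 + n :=
          natDegree_mul_le.trans (by gcongr; exact natDegree_derivative_le f)
        have d2 : (f * derivative g).natDegree ≤ m + (n - 1) :=
          natDegree_mul_le.trans (by gcongr; exact natDegree_derivative_le g)
        calc h2.natDegree ≤ max (derivative f * g).natDegree (f * derivative g).natDegree :=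
              natDegree_sub_le _ _
          _ < 2 * n - 1 := by
              rw [max_lt_iff]; omega
    rw [coeff_sub, coeff_add, c1, c2, c3, c4] at hN
    have hb2 : b * b = 0 := by linear_combination hN
    exact hb0 (mul_self_eq_zero.mp hb2)
  · -- m > n : coefficient at m+n+1
    have hN := hc (m + n + 1)
    have c1 : (X * g ^ 2).coeff (m + n + 1) = 0 := by
      rw [coeff_X_mul]
      apply coeff_eq_zero_of_natDegree_lt
      calc (g ^ 2).natDegree ≤ 2 * n := natDegree_pow_le_of_le 2 le_rfl |>.trans (by omega)
        _ < m + n := by omega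
    have c2 : (f * g).coeff (m + n + 1) = 0 := by
      apply coeff_eq_zero_of_natDegree_lt
      calc (f * g).natDegree ≤ m + n := natDegree_mul_le
        _ < m + n + 1 := by omega
    have c3 : (X ^ 2 * h2).coeff (m + n + 1) = h2.coeff (m + n - 1) := by
      have e : X ^ 2 * h2 = X * (X * h2) := by ring
      have e2 : m + n + 1 = (m + n - 1) + 1 + 1 := by omega
      rw [e, e2, coeff_X_mul, coeff_X_mul]
    rw [coeff_sub, coeff_add, c1, c2, c3, hkey] at hN
    have hmn' : (m : F) ≠ (n : F) := by
      exact_mod_cast Nat.cast_injective.ne hmn.ne'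
    have hz : a * b * ((m : F) - n) = 0 := by linear_combination -hN
    rcases mul_eq_zero.mp hz with h' | h'
    · exact (mul_ne_zero ha0 hb0) h'
    · exact hmn' (sub_eq_zero.mp h')
end
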